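/- Let U ⊆ ℂ be open and g : U → ℂ holomorphic with g'(z) ≠ 0 for all z ∈ U; set ω(x,y) = log|g'(x+iy)|. Fix x₀ ∈ ℝ and let J be an open interval with x₀ + iy ∈ U for all y ∈ J; define γ : J → ℝ² by γ(y) = g(x₀ + iy). Then γ is regular and its curvature κ(y) = ⟨γ''(y), Jγ'(y)⟩ / ‖γ'(y)‖³, where J denotes rotation by π/2 (J(a,b) = (−b,a)), satisfies κ(y) = e^{−ω(x₀,y)} · Re( g''(x₀+iy) / g'(x₀+iy) ) for all y ∈ J. Moreover, if α, β ∈ ℝ are such that 2ω_x(x₀,y) = −α e^{−ω(x₀,y)} − β e^{ω(x₀,y)} for all y ∈ J, then −2κ(y) = β + α e^{−2ω(x₀,y)} for all y ∈ J; in particular, if α = 0 then γ has constant curvature −β/2, so it is contained in a circle or a line. -/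

import Mathlib

/-!
Along the vertical line the chain rule gives `γ' = i g'` and `γ'' = i² g'' = -g''`, so
`⟨γ'', Jγ'⟩ = Re (g'' conj g')` and `κ = Re (g''/g') / |g'|`. Differentiating `ω = log |g'|`
horizontally gives `ω_x = Re (g''/g')` as well, i.e. `κ = e^{-ω} ω_x`; substituting the
capillary condition for `ω_x` yields `-2κ = β + α e^{-2ω}`.
-/

open Complex ComplexConjugate

lemma HasDerivAt.comp_const_add_ofReal_mul_I {f : ℂ → ℂ} {f' c : ℂ} {y : ℝ}
    (hf : HasDerivAt f f' (c + y * I)) :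
    HasDerivAt (fun s : ℝ => f (c + s * I)) (I * f') y := by
  have hline : HasDerivAt (fun w : ℂ => c + w * I) I y := by
    simpa using ((hasDerivAt_id (y : ℂ)).mul_const I).const_add c
  simpa [mul_comm] using (hf.comp (y : ℂ) hline).comp_ofReal

lemma HasDerivAt.comp_add_ofReal {f : ℂ → ℂ} {f' z : ℂ} (hf : HasDerivAt f f' z) :
    HasDerivAt (fun t : ℝ => f (z + t)) f' 0 := by
  have : HasDerivAt (fun w : ℂ => f (z + w)) f' ((0 : ℝ) : ℂ) :=
    HasDerivAt.comp_const_add z 0 (by simpa using hf)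
  exact this.comp_ofReal

open RealInnerProductSpace in
lemma HasDerivAt.log_norm {F : Type*} [NormedAddCommGroup F] [InnerProductSpace ℝ F]
    {h : ℝ → F} {d : F} {t : ℝ} (hh : HasDerivAt h d t) (h0 : h t ≠ 0) :
    HasDerivAt (fun s => Real.log ‖h s‖) (⟪h t, d⟫ / ‖h t‖ ^ 2) t := by
  have hsq : (fun s => Real.log ‖h s‖) = fun s => Real.log (‖h s‖ ^ 2) / 2 := by
    funext s
    rw [Real.log_pow]
    ring
  rw [hsq]
  exact ((hh.norm_sq.log (by positivity)).div_const 2).congr_deriv (by ring)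

lemma Complex.real_inner_div_norm_sq (a b : ℂ) : inner ℝ a b / ‖a‖ ^ 2 = (b / a).re := by
  rw [Complex.inner, Complex.div_re, ← Complex.normSq_eq_norm_sq]
  simp only [mul_re, conj_re, conj_im]
  ring

noncomputable def signedCurvature (v a : ℂ) : ℝ := (a * conj (I * v)).re / ‖v‖ ^ 3

lemma signedCurvature_I_mul (a b : ℂ) :
    signedCurvature (I * a) (I * (I * b)) = ‖a‖⁻¹ * (b / a).re := by
  rw [signedCurvature, ← Complex.real_inner_div_norm_sq, Complex.inner]
  simp only [map_mul, conj_I, norm_mul, norm_I, one_mul]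
  rw [show I * (I * b) * (-I * (-I * conj a)) = b * conj a by
    linear_combination ((I ^ 2 - 1) * b * conj a) * I_sq]
  ring

lemma neg_two_mul_eq_of_capillary {ω ρ κ α β : ℝ} (hκ : κ = Real.exp (-ω) * ρ)
    (hcap : 2 * ρ = -α * Real.exp (-ω) - β * Real.exp ω) :
    -2 * κ = β + α * Real.exp (-2 * ω) := by
  have hsq : Real.exp (-2 * ω) = Real.exp (-ω) ^ 2 := by
    rw [← Real.exp_nat_mul]; ring_nf
  have hinv : Real.exp ω = (Real.exp (-ω))⁻¹ := by rw [Real.exp_neg, inv_inv]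
  rw [hsq, hκ]
  rw [hinv] at hcap
  have he : Real.exp (-ω) ≠ 0 := (Real.exp_pos _).ne'
  field_simp at hcap ⊢
  linarith

theorem curvature_of_capillary_parameter_curve_general
    (U : Set ℂ)
    (g g' g'' : ℂ → ℂ)
    (hg : ∀ z ∈ U, HasDerivAt g (g' z) z)
    (hg' : ∀ z ∈ U, HasDerivAt g' (g'' z) z)
    (hne : ∀ z ∈ U, g' z ≠ 0)
    (x₀ : ℝ) (J : Set ℝ) (hJopen : IsOpen J)
    (hmem : ∀ y ∈ J, (x₀ : ℂ) + (y : ℂ) * Complex.I ∈ U)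
    (γ' γ'' : ℝ → ℂ)
    (hγ' : ∀ y ∈ J, HasDerivAt (fun s : ℝ => g ((x₀ : ℂ) + (s : ℂ) * Complex.I)) (γ' y) y)
    (hγ'' : ∀ y ∈ J, HasDerivAt γ' (γ'' y) y)
    (κ : ℝ → ℝ)
    (hκ : ∀ y, κ y = (γ'' y * (starRingEnd ℂ) (Complex.I * γ' y)).re / ‖γ' y‖ ^ 3)
    (α β : ℝ) (ωx : ℝ → ℝ)
    (hωx : ∀ y ∈ J, HasDerivAt
      (fun t : ℝ => Real.log (‖g' ((x₀ : ℂ) + (y : ℂ) * Complex.I + (t : ℂ))‖))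
      (ωx y) 0) :
    (∀ y ∈ J, γ' y ≠ 0) ∧
    (∀ y ∈ J, κ y
      = Real.exp (-(Real.log (‖g' ((x₀ : ℂ) + (y : ℂ) * Complex.I)‖)))
        * (g'' ((x₀ : ℂ) + (y : ℂ) * Complex.I) / g' ((x₀ : ℂ) + (y : ℂ) * Complex.I)).re) ∧
    ((∀ y ∈ J, 2 * ωx y
        = -α * Real.exp (-(Real.log (‖g' ((x₀ : ℂ) + (y : ℂ) * Complex.I)‖)))
          - β * Real.exp (Real.log (‖g' ((x₀ : ℂ) + (y : ℂ) * Complex.I)‖))) →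
      (∀ y ∈ J, -2 * κ y
        = β + α * Real.exp (-2 * Real.log (‖g' ((x₀ : ℂ) + (y : ℂ) * Complex.I)‖))) ∧
      (α = 0 → ∀ y ∈ J, κ y = -β / 2)) := by
  have hvel : ∀ y ∈ J, γ' y = I * g' (x₀ + y * I) := fun y hy =>
    (hγ' y hy).unique (hg _ (hmem y hy)).comp_const_add_ofReal_mul_I
  have hacc : ∀ y ∈ J, γ'' y = I * (I * g'' (x₀ + y * I)) := fun y hy =>
    (hγ'' y hy).unique <|
      ((hg' _ (hmem y hy)).comp_const_add_ofReal_mul_I.const_mul I).congr_of_eventuallyEq <|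
        Filter.eventually_of_mem (hJopen.mem_nhds hy) hvel
  have hcurv : ∀ y ∈ J, κ y = Real.exp (-Real.log ‖g' (x₀ + y * I)‖)
      * (g'' (x₀ + y * I) / g' (x₀ + y * I)).re := fun y hy => by
    rw [Real.exp_neg, Real.exp_log (norm_pos_iff.2 (hne _ (hmem y hy))), hκ, hvel y hy, hacc y hy]
    exact signedCurvature_I_mul _ _
  have hωx_eq : ∀ y ∈ J, ωx y = (g'' (x₀ + y * I) / g' (x₀ + y * I)).re := fun y hy => by
    have hlog := (hg' _ (hmem y hy)).comp_add_ofReal.log_norm (by simpa using hne _ (hmem y hy))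
    rw [ofReal_zero, add_zero, Complex.real_inner_div_norm_sq] at hlog
    exact (hωx y hy).unique hlog
  refine ⟨fun y hy => hvel y hy ▸ mul_ne_zero I_ne_zero (hne _ (hmem y hy)), hcurv,
    fun hcap => ?_⟩
  have hmain : ∀ y ∈ J, -2 * κ y = β + α * Real.exp (-2 * Real.log ‖g' (x₀ + y * I)‖) :=
    fun y hy => neg_two_mul_eq_of_capillary (hcurv y hy) (hωx_eq y hy ▸ hcap y hy)
  refine ⟨hmain, fun hα y hy => ?_⟩
  have h := hmain y hy
  rw [hα, zero_mul, add_zero] at h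
  linarith

/-- Lemma 2.8: the curvature of the vertical parameter curve `γ(y) = g(x₀+iy)` of a
holomorphic map with nonvanishing derivative is `κ = e^{−ω} Re(g''/g')`, where
`ω = log|g'|`; and if `2ω_x = −αe^{−ω} − βe^{ω}` along the curve, then
`−2κ = β + αe^{−2ω}`; in particular for `α = 0` the curvature is constantly `−β/2`. -/
theorem curvature_of_capillary_parameter_curve
    (U : Set ℂ) (hU : IsOpen U)
    (g g' g'' : ℂ → ℂ)
    (hg : ∀ z ∈ U, HasDerivAt g (g' z) z)
    (hg' : ∀ z ∈ U, HasDerivAt g' (g'' z) z)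
    (hne : ∀ z ∈ U, g' z ≠ 0)
    (x₀ : ℝ) (J : Set ℝ) (hJopen : IsOpen J) (hJconn : J.OrdConnected)
    (hmem : ∀ y ∈ J, (x₀ : ℂ) + (y : ℂ) * Complex.I ∈ U)
    (γ' γ'' : ℝ → ℂ)
    (hγ' : ∀ y ∈ J, HasDerivAt (fun s : ℝ => g ((x₀ : ℂ) + (s : ℂ) * Complex.I)) (γ' y) y)
    (hγ'' : ∀ y ∈ J, HasDerivAt γ' (γ'' y) y)
    (κ : ℝ → ℝ)
    (hκ : ∀ y, κ y = (γ'' y * (starRingEnd ℂ) (Complex.I * γ' y)).re / ‖γ' y‖ ^ 3)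
    (α β : ℝ) (ωx : ℝ → ℝ)
    (hωx : ∀ y ∈ J, HasDerivAt
      (fun t : ℝ => Real.log (‖g' ((x₀ : ℂ) + (y : ℂ) * Complex.I + (t : ℂ))‖))
      (ωx y) 0) :
    (∀ y ∈ J, γ' y ≠ 0) ∧
    (∀ y ∈ J, κ y
      = Real.exp (-(Real.log (‖g' ((x₀ : ℂ) + (y : ℂ) * Complex.I)‖)))
        * (g'' ((x₀ : ℂ) + (y : ℂ) * Complex.I) / g' ((x₀ : ℂ) + (y : ℂ) * Complex.I)).re) ∧
    ((∀ y ∈ J, 2 * ωx y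
        = -α * Real.exp (-(Real.log (‖g' ((x₀ : ℂ) + (y : ℂ) * Complex.I)‖)))
          - β * Real.exp (Real.log (‖g' ((x₀ : ℂ) + (y : ℂ) * Complex.I)‖))) →
      (∀ y ∈ J, -2 * κ y
        = β + α * Real.exp (-2 * Real.log (‖g' ((x₀ : ℂ) + (y : ℂ) * Complex.I)‖))) ∧
      (α = 0 → ∀ y ∈ J, κ y = -β / 2)) :=
  curvature_of_capillary_parameter_curve_general U g g' g'' hg hg' hne x₀ J hJopen hmem γ' γ'' hγ'
    hγ'' κ hκ α β ωx hωx
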